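/- Let G be a simple graph on a vertex set V with unit edge costs, let t ∈ V, and let h : V → ℝ satisfy h(t) = 0 and edge-consistency h(u) ≤ 1 + h(v) for all adjacent u, v. If w is a walk from a source s to t of length exactly L (a natural number), then for every index 0 ≤ i ≤ L the vertex n_i at position i of w satisfies L − i − h(n_i) ≥ 0; that is, every prefix of an exact-length-L walk survives the pruning rule f ≥ 0 under a consistent heuristic. -/
import Mathlib

lemma aux_consistent {V : Type*} (G : SimpleGraph V) (h : V → ℝ)
    (hcons : ∀ u v : V, G.Adj u v → h u ≤ 1 + h v) :
    ∀ {s t : V} (w : G.Walk s t) (i : ℕ), i ≤ w.length →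
      h (w.getVert i) - h t ≤ (w.length : ℝ) - i := by
  intro s t w
  induction w with
  | nil =>
    intro i hi
    simp only [SimpleGraph.Walk.length_nil, Nat.le_zero] at hi
    subst hi
    simp
  | cons adj w ih =>
    intro i hi
    cases i with
    | zero =>
      have h0 := ih 0 (Nat.zero_le _)
      have h1 := hcons _ _ adj
      simp only [SimpleGraph.Walk.getVert_zero, SimpleGraph.Walk.length_cons] at *
      push_cast
      linarith
    | succ i =>
      have heq : (SimpleGraph.Walk.cons adj w).getVert (i + 1) = w.getVert i := rfl
      rw [heq]
      have hle : i ≤ w.length := by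
        simpa [SimpleGraph.Walk.length_cons] using Nat.succ_le_succ_iff.mp hi
      have := ih i hle
      simp only [SimpleGraph.Walk.length_cons]
      push_cast
      linarith

/-- Under a consistent heuristic (`h t = 0` and `h u ≤ 1 + h v` for adjacent
`u, v`), every prefix of a walk from `s` to `t` of exact length `L` survives
the pruning rule: `L - i - h(nᵢ) ≥ 0` at every position `i` of the walk. -/
theorem consistent_pruning_keeps_exact_walk {V : Type*} (G : SimpleGraph V)
    (t : V) (h : V → ℝ)
    (ht : h t = 0)
    (hcons : ∀ u v : V, G.Adj u v → h u ≤ 1 + h v)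
    {s : V} (L : ℕ) (w : G.Walk s t) (hw : w.length = L) :
    ∀ i : ℕ, i ≤ L → (L : ℝ) - (i : ℝ) - h (w.getVert i) ≥ 0 := by
  intro i hi
  have := aux_consistent G h hcons w i (by omega)
  rw [hw, ht] at this
  linarith
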